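/- arXiv:1610.06457 — 4 statements merged into one kernel-verified Lean document; each statement's English description precedes it below -/
import Mathlib

section
/- Every tree T with n >= 2 vertices and maximum vertex degree at most D (D >= 1) contains a matching of size at least (n-1)/D. -/
open SimpleGraph

/-- An acyclic graph with an edge has a leaf: a vertex with a unique neighbor. -/
lemma exists_leaf_aux {V : Type*} [Fintype V] {G : SimpleGraph V} (hG : G.IsAcyclic)
    {x y : V} (hxy : G.Adj x y) :
    ∃ v u, G.Adj v u ∧ ∀ w, G.Adj v w → w = u := by
  classical
  set P : ℕ → Prop := fun n => ∃ (a b : V) (p : G.Walk a b), p.IsPath ∧ p.length = n with hP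
  have h1 : P 1 := by
    refine ⟨x, y, Walk.cons hxy Walk.nil, ?_, by simp⟩
    simp [Walk.cons_isPath_iff, hxy.ne]
  have hb1 : 1 ≤ Fintype.card V := Fintype.card_pos_iff.mpr ⟨x⟩
  set N := Nat.findGreatest P (Fintype.card V) with hN
  have hPN : P N := Nat.findGreatest_spec hb1 h1
  have hmax : ∀ {a b : V} (q : G.Walk a b), q.IsPath → q.length ≤ N := by
    intro a b q hq
    by_contra h
    exact Nat.findGreatest_is_greatest (Nat.lt_of_not_le h) hq.length_lt.le
      ⟨a, b, q, hq, rfl⟩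
  obtain ⟨a, b, p, hp, hlen⟩ := hPN
  have hN1 : 1 ≤ N := by
    have := hmax (Walk.cons hxy Walk.nil) (by simp [Walk.cons_isPath_iff, hxy.ne])
    simpa using this
  set r := p.reverse with hrdef
  have hr : r.IsPath := hp.reverse
  have hrlen : r.length = N := by simp [hrdef, hlen]
  have hnil : ¬ r.Nil := by
    rw [Walk.nil_iff_length_eq, hrlen]
    omega
  refine ⟨b, r.getVert 1, Walk.adj_snd hnil, ?_⟩
  intro w hw
  have hws : w ∈ r.support := by
    by_contra hws
    have hcons : (Walk.cons hw.symm r).IsPath :=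
      (Walk.cons_isPath_iff _ _).mpr ⟨hr, hws⟩
    have := hmax _ hcons
    simp [hrlen] at this
  set d := r.takeUntil w hws with hd
  have hdp : d.IsPath := hr.takeUntil hws
  have hsingle : (Walk.cons hw Walk.nil : G.Walk b w).IsPath := by
    simp [Walk.cons_isPath_iff, hw.ne]
  have heq : d = Walk.cons hw Walk.nil := by
    have := hG.path_unique ⟨d, hdp⟩ ⟨_, hsingle⟩
    exact congrArg Subtype.val this
  have hspec := r.take_spec hws
  have : r.getVert 1 = (d.append (r.dropUntil w hws)).getVert 1 := by
    rw [hd, hspec]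
  rw [this, Walk.getVert_append]
  have hdl : d.length = 1 := by rw [heq]; simp
  rw [hdl]
  simp

/-- König-type lemma for acyclic graphs: a matching together with a vertex cover
of no greater cardinality. -/
lemma konig_forest {V : Type*} [Fintype V] :
    ∀ (n : ℕ) (G : SimpleGraph V), G.edgeSet.ncard ≤ n → G.IsAcyclic →
    ∃ (M : G.Subgraph) (C : Finset V), M.IsMatching ∧
      (∀ e ∈ G.edgeSet, ∃ c ∈ C, c ∈ e) ∧ C.card ≤ M.edgeSet.ncard := by
  classical
  intro n
  induction n with
  | zero =>
    intro G hn _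
    have he : G.edgeSet = ∅ :=
      (Set.ncard_eq_zero (G.edgeSet.toFinite)).mp (Nat.le_zero.mp hn)
    refine ⟨⊥, ∅, ?_, ?_, by simp⟩
    · intro v hv
      simp [Subgraph.verts_bot] at hv
    · intro e heset
      rw [he] at heset
      exact absurd heset (Set.notMem_empty e)
  | succ n ih =>
    intro G hn hG
    by_cases hempty : G.edgeSet = ∅
    · refine ⟨⊥, ∅, ?_, ?_, by simp⟩
      · intro v hv
        simp [Subgraph.verts_bot] at hv
      · intro e heset
        rw [hempty] at heset
        exact absurd heset (Set.notMem_empty e)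
    · obtain ⟨e, he⟩ := Set.nonempty_iff_ne_empty.mpr hempty
      induction e with
      | _ x y =>
      have hxy : G.Adj x y := he
      obtain ⟨v, u, hvu, hleaf⟩ := exists_leaf_aux hG hxy
      -- delete all edges incident to u or v
      set s : Set (Sym2 V) := {e | u ∈ e ∨ v ∈ e} with hs
      set G' : SimpleGraph V := G.deleteEdges s with hG'
      have hle : G' ≤ G := G.deleteEdges_le s
      have hG'ac : G'.IsAcyclic := by
        intro a c hc
        exact hG (c.mapLe hle) (hc.mapLe hle)
      have hG'edge : G'.edgeSet = G.edgeSet \ s := G.edgeSet_deleteEdges s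
      have hmem : s(u, v) ∈ G.edgeSet \ G'.edgeSet := by
        constructor
        · exact hvu.symm
        · rw [hG'edge]
          intro h
          exact h.2 (Or.inl (by simp))
      have hss : G'.edgeSet ⊂ G.edgeSet := by
        constructor
        · rw [hG'edge]; exact Set.diff_subset
        · intro h
          exact hmem.2 (h hmem.1)
      have hlt : G'.edgeSet.ncard < G.edgeSet.ncard :=
        Set.ncard_lt_ncard hss (G.edgeSet.toFinite)
      obtain ⟨M', C', hM', hcov', hcard'⟩ := ih G' (by omega) hG'ac
      -- u and v are not matched by M'
      have hverts : ∀ z ∈ M'.verts, z ≠ u ∧ z ≠ v := by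
        intro z hz
        obtain ⟨w, hw, -⟩ := hM' hz
        have hGw : G'.Adj z w := M'.adj_sub hw
        have : ¬ (u ∈ s(z, w) ∨ v ∈ s(z, w)) := by
          rw [hG', deleteEdges_adj] at hGw
          exact hGw.2
        push_neg at this
        constructor
        · rintro rfl; exact this.1 (by simp)
        · rintro rfl; exact this.2 (by simp)
      -- lift M' to a subgraph of G
      set M₀ : G.Subgraph :=
        ⟨M'.verts, M'.Adj, fun h => hle (M'.adj_sub h), M'.edge_vert, M'.symm⟩ with hM₀
      have hM₀m : M₀.IsMatching := hM'
      have hM₀e : M₀.edgeSet = M'.edgeSet := rfl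
      set M : G.Subgraph := M₀ ⊔ G.subgraphOfAdj hvu.symm with hM
      have hdisj : Disjoint M₀.support (G.subgraphOfAdj hvu.symm).support := by
        rw [hM₀m.support_eq_verts, G.support_subgraphOfAdj]
        rw [Set.disjoint_right]
        intro z hz hzv
        rcases hz with rfl | rfl
        · exact (hverts _ hzv).1 rfl
        · exact (hverts _ hzv).2 rfl
      have hMm : M.IsMatching := hM₀m.sup (Subgraph.IsMatching.subgraphOfAdj _) hdisj
      have hnotin : s(u, v) ∉ M'.edgeSet := by
        intro h
        have := M'.edgeSet_subset h
        rw [hG'edge] at this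
        exact this.2 (Or.inl (by simp))
      have hMedge : M.edgeSet = insert (s(u, v)) M'.edgeSet := by
        rw [hM, Subgraph.edgeSet_sup, hM₀e, SimpleGraph.edgeSet_subgraphOfAdj, Set.union_singleton]
      have hMcard : M.edgeSet.ncard = M'.edgeSet.ncard + 1 := by
        rw [hMedge, Set.ncard_insert_of_notMem hnotin (M'.edgeSet.toFinite)]
      refine ⟨M, insert u C', hMm, ?_, ?_⟩
      · intro e heG
        by_cases heG' : e ∈ G'.edgeSet
        · obtain ⟨c, hc, hce⟩ := hcov' e heG'
          exact ⟨c, Finset.mem_insert_of_mem hc, hce⟩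
        · have hes : e ∈ s := by
            rw [hG'edge] at heG'
            by_contra h
            exact heG' ⟨heG, h⟩
          rcases hes with hu | hv
          · exact ⟨u, Finset.mem_insert_self _ _, hu⟩
          · -- v ∈ e, so e = s(v, w) with w adjacent to v, hence w = u, so u ∈ e
            induction e with
            | _ a b =>
            rcases Sym2.mem_iff.mp hv with rfl | rfl
            · have : b = u := hleaf b heG
              exact ⟨u, Finset.mem_insert_self _ _, by simp [this]⟩
            · have : a = u := hleaf a (G.adj_symm heG)
              exact ⟨u, Finset.mem_insert_self _ _, by simp [this]⟩
      · calc (insert u C').card ≤ C'.card + 1 := Finset.card_insert_le _ _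
          _ ≤ M'.edgeSet.ncard + 1 := by omega
          _ = M.edgeSet.ncard := hMcard.symm

/-- Every tree with `n ≥ 2` vertices and maximum degree at most `D ≥ 1`
contains a matching of size at least `(n - 1) / D`. -/
theorem stmt_5 {V : Type*} [Fintype V] (G : SimpleGraph V) [DecidableRel G.Adj]
    (hT : G.IsTree) (D : ℕ) (hD : 1 ≤ D)
    (hn : 2 ≤ Fintype.card V) (hdeg : ∀ v, G.degree v ≤ D) :
    ∃ M : G.Subgraph, M.IsMatching ∧ Fintype.card V - 1 ≤ D * M.edgeSet.ncard := by
  classical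
  obtain ⟨M, C, hM, hcov, hcard⟩ :=
    konig_forest G.edgeSet.ncard G le_rfl hT.IsAcyclic
  refine ⟨M, hM, ?_⟩
  have hedges : G.edgeFinset.card + 1 = Fintype.card V := hT.card_edgeFinset
  have hsub : G.edgeFinset ⊆ C.biUnion (fun c => G.incidenceFinset c) := by
    intro e he
    rw [mem_edgeFinset] at he
    obtain ⟨c, hc, hce⟩ := hcov e he
    exact Finset.mem_biUnion.mpr ⟨c, hc, by rw [mem_incidenceFinset]; exact ⟨he, hce⟩⟩
  have h1 : G.edgeFinset.card ≤ ∑ c ∈ C, G.degree c := by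
    calc G.edgeFinset.card ≤ (C.biUnion (fun c => G.incidenceFinset c)).card :=
          Finset.card_le_card hsub
      _ ≤ ∑ c ∈ C, (G.incidenceFinset c).card := Finset.card_biUnion_le
      _ = ∑ c ∈ C, G.degree c := by
          simp [SimpleGraph.card_incidenceFinset_eq_degree]
  have h2 : ∑ c ∈ C, G.degree c ≤ D * C.card := by
    calc ∑ c ∈ C, G.degree c ≤ ∑ _c ∈ C, D := Finset.sum_le_sum (fun c _ => hdeg c)
      _ = D * C.card := by rw [Finset.sum_const, smul_eq_mul, mul_comm]
  have h3 : D * C.card ≤ D * M.edgeSet.ncard := Nat.mul_le_mul_left D hcard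
  omega
end

section
/- Let P be a set of n points in convex position in the plane, with n even. Then there exist n/2 pairwise edge-disjoint non-crossing perfect matchings of P. Explicitly, labeling the points p_0,...,p_{n-1} in convex (radial) order, for each i with 0 <= i < n/2 the set M_i = { {p_{i+j-1}, p_{n+i-j}} : j = 1,...,n/2 } (indices modulo n) is a non-crossing perfect matching, and the matchings M_0,...,M_{n/2 - 1} are pairwise edge-disjoint. -/
/-!
Write `c = 2i - 1`, so that `M_i` pairs every vertex `v` with `c - v`. As `n` is even, every `v`
is `i + a` or `i - 1 - a` for some `a < n/2`; hence `M_i` is a perfect matching, and since `c`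
is read off any edge of `M_i` and `2i` determines `i < n/2`, the matchings are edge-disjoint.

Two edges of `M_i` are nested chords: after a rotation of the labels they are `{0, K}` and
`{s, t}` with `0 < s, t < K`. The vertices `1, …, K-1` lie strictly on one side of the line `L`
through `p 0` and `p K`. Otherwise some polygon edge `[p r, p (r+1)]` with `0 < r < r + 1 < K`
meets `L` at a point `y`. The supporting line of that edge leaves `p 0` and `p K` strictly on one
side, so `y` is not between them, and one of `p 0`, `p K` lies between `y` and the other,
contradicting convex position. So the chord `{s, t}` misses `L`, which contains `{0, K}`.
-/

open Set Module Fin.NatCast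

section Dimension

variable {K E : Type*} [Field K] [AddCommGroup E] [Module K E]

theorem collinear_preimage_singleton [FiniteDimensional K E] (hE : finrank K E = 2)
    {f : Dual K E} (hf : f ≠ 0) (c : K) : Collinear K (f ⁻¹' {c}) := by
  have hker : finrank K (LinearMap.ker f) = 1 := by
    have := Dual.finrank_ker_add_one_of_ne_zero hf
    omega
  rw [collinear_iff_finrank_le_one, ← hker]
  refine Submodule.finrank_mono ?_
  rw [vectorSpan_def, Submodule.span_le]
  rintro _ ⟨x, hx, y, hy, rfl⟩
  simp_all

theorem collinear_of_apply_eq [FiniteDimensional K E] (hE : finrank K E = 2) {f : Dual K E}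
    (hf : f ≠ 0) {x y z : E} (hy : f y = f x) (hz : f z = f x) : Collinear K {x, y, z} :=
  (collinear_preimage_singleton hE hf (f x)).subset (by simp [insert_subset_iff, hy, hz])

theorem exists_dual_ne_zero_apply_eq_zero (hE : 2 ≤ finrank K E) (v : E) :
    ∃ f : Dual K E, f ≠ 0 ∧ f v = 0 := by
  have hlt : K ∙ v < ⊤ := by
    refine Submodule.lt_top_of_finrank_lt_finrank ?_
    have := finrank_span_le_card (R := K) ({v} : Set E)
    simp only [toFinset_singleton, Finset.card_singleton] at this
    omega
  obtain ⟨f, hf, hle⟩ := (K ∙ v).exists_le_ker_of_lt_top hlt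
  exact ⟨f, hf, hle (Submodule.mem_span_singleton_self v)⟩

end Dimension

theorem Module.Dual.apply_mem_uIcc {E : Type*} [AddCommGroup E] [Module ℝ E] (f : Dual ℝ E)
    {a b x : E} (hx : x ∈ segment ℝ a b) : f x ∈ uIcc (f a) (f b) := by
  rw [← segment_eq_uIcc]
  obtain ⟨s, t, hs, ht, hst, rfl⟩ := hx
  exact ⟨s, t, hs, ht, hst, by simp⟩

theorem Set.notMem_uIcc_iff {α : Type*} [LinearOrder α] {a b c : α} :
    c ∉ uIcc a b ↔ (a < c ↔ b < c) ∧ a ≠ c ∧ b ≠ c := by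
  rw [mem_uIcc]
  grind

theorem Fin.natCast_ne_natCast {n : ℕ} [NeZero n] {a b : ℕ} (ha : a < n) (hb : b < n)
    (hab : a ≠ b) : (a : Fin n) ≠ b := by
  simpa [Fin.ext_iff, Fin.val_cast_of_lt ha, Fin.val_cast_of_lt hb] using hab

open Fin.CommRing in
theorem Fin.natCast_self_sub {n k : ℕ} [NeZero n] (hk : k ≤ n) :
    ((n - k : ℕ) : Fin n) = -(k : Fin n) := by
  rw [Nat.cast_sub hk, Fin.natCast_self, zero_sub]

section Polygon

variable {E : Type*} [NormedAddCommGroup E] [NormedSpace ℝ E] {n : ℕ} [NeZero n]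

structure IsConvexPolygon (p : Fin n → E) : Prop where
  injective : Function.Injective p
  notMem_convexHull_diff : ∀ i, p i ∉ convexHull ℝ (range p \ {p i})
  segment_subset_frontier : ∀ i, segment ℝ (p i) (p (i + 1)) ⊆ frontier (convexHull ℝ (range p))

namespace IsConvexPolygon

variable {p : Fin n → E}

theorem rotate (hP : IsConvexPolygon p) (u : Fin n) : IsConvexPolygon fun k => p (u + k) := by
  have hrange : range (fun k => p (u + k)) = range p :=
    (Equiv.addLeft u).surjective.range_comp p
  refine ⟨hP.injective.comp (add_right_injective u), fun k => ?_, fun k => ?_⟩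
  · rw [hrange]
    exact hP.notMem_convexHull_diff (u + k)
  · rw [hrange, ← add_assoc]
    exact hP.segment_subset_frontier (u + k)

theorem mem_convexHull_diff (hP : IsConvexPolygon p) {i j : Fin n} (hji : j ≠ i) :
    p j ∈ convexHull ℝ (range p \ {p i}) :=
  subset_convexHull ℝ _ ⟨mem_range_self j, hP.injective.ne hji⟩

theorem not_wbtw (hP : IsConvexPolygon p) {i : Fin n} {x y : E}
    (hx : x ∈ convexHull ℝ (range p \ {p i})) (hy : y ∈ convexHull ℝ (range p \ {p i})) :
    ¬ Wbtw ℝ x (p i) y := fun h =>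
  hP.notMem_convexHull_diff i
    ((convex_convexHull ℝ _).segment_subset hx hy (mem_segment_iff_wbtw.2 h))

theorem not_collinear (hP : IsConvexPolygon p) {i j k : Fin n} (hij : i ≠ j) (hik : i ≠ k)
    (hjk : j ≠ k) : ¬ Collinear ℝ {p i, p j, p k} := by
  intro h
  rcases h.wbtw_or_wbtw_or_wbtw with h | h | h
  · exact hP.not_wbtw (hP.mem_convexHull_diff hij) (hP.mem_convexHull_diff hjk.symm) h
  · exact hP.not_wbtw (hP.mem_convexHull_diff hjk) (hP.mem_convexHull_diff hik) h
  · exact hP.not_wbtw (hP.mem_convexHull_diff hik.symm) (hP.mem_convexHull_diff hij.symm) h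

variable [FiniteDimensional ℝ E]

theorem interior_convexHull_nonempty (hP : IsConvexPolygon p) (hE : finrank ℝ E = 2)
    (hn : 3 ≤ n) : (interior (convexHull ℝ (range p))).Nonempty := by
  rw [(convex_convexHull ℝ _).interior_nonempty_iff_affineSpan_eq_top, affineSpan_convexHull]
  have hind : AffineIndependent ℝ ![p ⟨0, by omega⟩, p ⟨1, by omega⟩, p ⟨2, by omega⟩] := by
    rw [affineIndependent_iff_not_collinear_set]
    exact hP.not_collinear (by simp) (by simp) (by simp)
  have htop := hind.affineSpan_eq_top_iff_card_eq_finrank_add_one.2 (by simp [hE])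
  refine eq_top_iff.2 (htop.ge.trans (affineSpan_mono ℝ ?_))
  rw [range_subset_iff]
  intro k
  fin_cases k <;> exact mem_range_self _

theorem exists_dual_supporting_edge (hP : IsConvexPolygon p) (hE : finrank ℝ E = 2)
    (hn : 3 ≤ n) (j : Fin n) : ∃ f : Dual ℝ E, f (p (j + 1)) = f (p j) ∧
      ∀ w, w ≠ j → w ≠ j + 1 → f (p w) < f (p j) := by
  set x := midpoint ℝ (p j) (p (j + 1))
  have hx : x ∉ interior (convexHull ℝ (range p)) :=
    (hP.segment_subset_frontier j (midpoint_mem_segment _ _)).2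
  obtain ⟨f, hf0, hf⟩ := geometric_hahn_banach_of_nonempty_interior_point
    (convex_convexHull ℝ _) hx (hP.interior_convexHull_nonempty hE hn)
  have hle : ∀ w, f (p w) ≤ f x := fun w => hf _ (subset_convexHull ℝ _ (mem_range_self w))
  have hfx : f x = (f (p j) + f (p (j + 1))) / 2 := by
    simp only [x, midpoint_eq_smul_add, map_smul, map_add, smul_eq_mul, invOf_eq_inv]
    ring
  have hj : f (p j) = f x := by linarith [hle j, hle (j + 1)]
  have hj1 : f (p (j + 1)) = f x := by linarith [hle j, hle (j + 1)]
  have hf0' : (f : Dual ℝ E) ≠ 0 := fun h => hf0 (ContinuousLinearMap.coe_injective h)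
  refine ⟨f, hj1.trans hj.symm, fun w hwj hwj1 => hj ▸ (hle w).lt_of_ne fun hw => ?_⟩
  have hjj : j ≠ j + 1 := by
    simp only [ne_eq, left_eq_add, Fin.one_eq_zero_iff]
    omega
  refine hP.not_collinear hjj (Ne.symm hwj) (Ne.symm hwj1) ?_
  exact collinear_of_apply_eq hE hf0' (x := p j) (by simpa using hj1.trans hj.symm)
    (by simpa using hw.trans hj.symm)

theorem notMem_uIcc_of_apply_eq (hP : IsConvexPolygon p) (hE : finrank ℝ E = 2)
    (hn : 3 ≤ n) {g : Dual ℝ E} (hg : g ≠ 0) {a b j : Fin n} (hab : a ≠ b) (haj : a ≠ j)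
    (haj' : a ≠ j + 1) (hbj : b ≠ j) (hbj' : b ≠ j + 1) (hgab : g (p b) = g (p a)) :
    g (p a) ∉ uIcc (g (p j)) (g (p (j + 1))) := by
  intro hmem
  rw [← segment_eq_uIcc] at hmem
  obtain ⟨y, hy, hgy⟩ : ∃ y ∈ segment ℝ (p j) (p (j + 1)), g y = g (p a) := by
    obtain ⟨s, t, hs, ht, hst, hc⟩ := hmem
    exact ⟨s • p j + t • p (j + 1), ⟨s, t, hs, ht, hst, rfl⟩, by simpa using hc⟩
  have hyS : ∀ {i}, i ≠ j → i ≠ j + 1 → y ∈ convexHull ℝ (range p \ {p i}) := fun hj hj' =>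
    (convex_convexHull ℝ _).segment_subset (hP.mem_convexHull_diff hj.symm)
      (hP.mem_convexHull_diff hj'.symm) hy
  obtain ⟨f, hfj, hf⟩ := hP.exists_dual_supporting_edge hE hn j
  have hfy : f (p j) ≤ f y := by
    have := f.apply_mem_uIcc hy
    rw [hfj, uIcc_self] at this
    exact this.ge
  rcases (collinear_of_apply_eq hE hg hgab hgy).wbtw_or_wbtw_or_wbtw with h | h | h
  · exact hP.not_wbtw (hP.mem_convexHull_diff hab) (hyS hbj hbj') h
  · rcases mem_uIcc.1 (f.apply_mem_uIcc (mem_segment_iff_wbtw.2 h)) with h | h <;>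
      linarith [hf a haj haj', hf b hbj hbj']
  · exact hP.not_wbtw (hyS haj haj') (hP.mem_convexHull_diff hab.symm) h

theorem lt_iff_lt_of_apply_eq (hP : IsConvexPolygon p) (hE : finrank ℝ E = 2)
    {g : Dual ℝ E} (hg : g ≠ 0) {K : ℕ} (hK : K < n) (hgK : g (p K) = g (p 0)) {t : ℕ}
    (ht : 0 < t) (htK : t < K) : g (p t) < g (p 0) ↔ g (p 1) < g (p 0) := by
  induction t with
  | zero => omega
  | succ t ih =>
    rcases Nat.eq_zero_or_pos t with rfl | ht
    · simp
    rw [← ih ht (by omega), Nat.cast_succ]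
    have hne {a b : ℕ} (hab : a ≠ b) (ha : a ≤ K) (hb : b ≤ K) : (a : Fin n) ≠ b :=
      Fin.natCast_ne_natCast (by omega) (by omega) hab
    refine ((notMem_uIcc_iff.1 (hP.notMem_uIcc_of_apply_eq hE (by omega) hg
      (by exact_mod_cast hne (a := 0) (b := K) (by omega) (by omega) le_rfl)
      (by exact_mod_cast hne (a := 0) (b := t) (by omega) (by omega) (by omega))
      (by exact_mod_cast hne (a := 0) (b := t + 1) (by omega) (by omega) (by omega))
      (by exact_mod_cast hne (a := K) (b := t) (by omega) le_rfl (by omega))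
      (by exact_mod_cast hne (a := K) (b := t + 1) (by omega) le_rfl (by omega)) hgK)).1).symm

theorem disjoint_openSegment_of_nested (hP : IsConvexPolygon p) (hE : finrank ℝ E = 2)
    {K s t : ℕ} (hK : K < n) (hs : 0 < s) (hsK : s < K) (ht : 0 < t) (htK : t < K) :
    Disjoint (openSegment ℝ (p 0) (p K)) (openSegment ℝ (p s) (p t)) := by
  obtain ⟨g, hg, hgK⟩ := exists_dual_ne_zero_apply_eq_zero hE.ge (p K - p 0)
  rw [map_sub, sub_eq_zero] at hgK
  have hne : ∀ r, 0 < r → r < K → g (p r) ≠ g (p 0) := fun r hr hrK hgr =>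
    hP.not_collinear (i := 0) (j := K) (k := r)
      (by exact_mod_cast Fin.natCast_ne_natCast (a := 0) (by omega) hK (by omega))
      (by exact_mod_cast Fin.natCast_ne_natCast (a := 0) (by omega) (by omega) (by omega))
      (Fin.natCast_ne_natCast hK (by omega) (by omega)) (collinear_of_apply_eq hE hg hgK hgr)
  rw [Set.disjoint_left]
  intro x hx hx'
  have hgx := g.apply_mem_uIcc (openSegment_subset_segment _ _ _ hx)
  rw [hgK, uIcc_self, mem_singleton_iff] at hgx
  refine notMem_uIcc_iff.2 ⟨?_, hne s hs hsK, hne t ht htK⟩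
    (hgx ▸ g.apply_mem_uIcc (openSegment_subset_segment _ _ _ hx'))
  rw [hP.lt_iff_lt_of_apply_eq hE hg hK hgK hs hsK, hP.lt_iff_lt_of_apply_eq hE hg hK hgK ht htK]

end IsConvexPolygon

end Polygon

theorem Sym2.eq_mk_sub_of_mem {G : Type*} [AddCommGroup G] {x y v : G} (hv : v ∈ s(x, y)) :
    s(x, y) = s(v, x + y - v) := by
  rcases Sym2.mem_iff.1 hv with rfl | rfl
  · rw [add_sub_cancel_left]
  · rw [add_sub_cancel_right, Sym2.eq_swap]

theorem openSegment_eq_of_mk_eq {ι E : Type*} [AddCommGroup E] [Module ℝ E] (p : ι → E)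
    {u v u' v' : ι} (h : s(u, v) = s(u', v')) :
    openSegment ℝ (p u) (p v) = openSegment ℝ (p u') (p v') := by
  rcases Sym2.eq_iff.1 h with ⟨rfl, rfl⟩ | ⟨rfl, rfl⟩
  · rfl
  · exact openSegment_symm _ _ _

/-- The matching `M_i` of the statement. -/
def reflectionMatching (n i : ℕ) [NeZero n] : Finset (Sym2 (Fin n)) :=
  (Finset.range (n / 2)).image
    fun a : ℕ => s((i : Fin n) + (a : Fin n), (i : Fin n) - 1 - (a : Fin n))

section Matching

open Fin.CommRing

variable {n : ℕ} [NeZero n]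

theorem exists_lt_half_eq_add_or_eq_sub (hn : Even n) (i : ℕ) (v : Fin n) :
    ∃ a < n / 2, v = (i : Fin n) + a ∨ v = (i : Fin n) - 1 - a := by
  obtain ⟨m, hm⟩ := hn
  set d := (v - i).val
  have hd : (d : Fin n) = v - i := Fin.cast_val_eq_self _
  rcases lt_or_ge d m with h | h
  · exact ⟨d, by omega, Or.inl (by rw [hd]; ring)⟩
  · refine ⟨n - (1 + d), by omega, Or.inr ?_⟩
    rw [Fin.natCast_self_sub (by omega)]
    push_cast
    rw [hd]
    ring

theorem mk_mem_reflectionMatching (hn : Even n) (i : ℕ) (v : Fin n) :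
    s(v, 2 * (i : Fin n) - 1 - v) ∈ reflectionMatching n i := by
  obtain ⟨a, ha, hv⟩ := exists_lt_half_eq_add_or_eq_sub hn i v
  refine Finset.mem_image.2 ⟨a, Finset.mem_range.2 ha, ?_⟩
  rcases hv with rfl | rfl
  · congr 1; ring
  · rw [Sym2.eq_swap]; congr 1; ring

theorem eq_mk_of_mem_reflectionMatching {i : ℕ} {e : Sym2 (Fin n)} {v : Fin n}
    (he : e ∈ reflectionMatching n i) (hv : v ∈ e) : e = s(v, 2 * (i : Fin n) - 1 - v) := by
  obtain ⟨a, -, rfl⟩ := Finset.mem_image.1 he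
  rw [Sym2.eq_mk_sub_of_mem hv]
  congr 1
  ring

theorem existsUnique_mem_reflectionMatching (hn : Even n) (i : ℕ) (v : Fin n) :
    ∃! e, e ∈ reflectionMatching n i ∧ v ∈ e :=
  ⟨_, ⟨mk_mem_reflectionMatching hn i v, Sym2.mem_mk_left _ _⟩,
    fun _ ⟨he, hv⟩ => eq_mk_of_mem_reflectionMatching he hv⟩

theorem disjoint_reflectionMatching {i j : ℕ} (hi : i < n / 2) (hj : j < n / 2) (hij : i ≠ j) :
    Disjoint (reflectionMatching n i) (reflectionMatching n j) := by
  refine Finset.disjoint_left.2 fun e hei hej => ?_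
  have h := (eq_mk_of_mem_reflectionMatching hei e.out_fst_mem).symm.trans
    (eq_mk_of_mem_reflectionMatching hej e.out_fst_mem)
  rw [Sym2.congr_right] at h
  refine Fin.natCast_ne_natCast (n := n) (a := 2 * i) (b := 2 * j)
    (by omega) (by omega) (by omega) ?_
  push_cast
  linear_combination h

theorem IsConvexPolygon.disjoint_openSegment_reflection {E : Type*} [NormedAddCommGroup E]
    [NormedSpace ℝ E] [FiniteDimensional ℝ E] {p : Fin n → E} (hP : IsConvexPolygon p)
    (hE : finrank ℝ E = 2) {i a b : ℕ} (hab : a < b) (hb : b < n / 2) :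
    Disjoint (openSegment ℝ (p ((i : Fin n) + a)) (p ((i : Fin n) - 1 - a)))
      (openSegment ℝ (p ((i : Fin n) + b)) (p ((i : Fin n) - 1 - b))) := by
  have h := (hP.rotate (i + a)).disjoint_openSegment_of_nested hE (K := n - (1 + 2 * a))
    (s := b - a) (t := n - (1 + a + b)) (by omega) (by omega) (by omega) (by omega) (by omega)
  have hK : (i + a : Fin n) + ((n - (1 + 2 * a) : ℕ) : Fin n) = i - 1 - a := by
    rw [Fin.natCast_self_sub (by omega)]; push_cast; ring
  have hs : (i + a : Fin n) + ((b - a : ℕ) : Fin n) = i + b := by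
    rw [Nat.cast_sub hab.le]; ring
  have ht : (i + a : Fin n) + ((n - (1 + a + b) : ℕ) : Fin n) = i - 1 - b := by
    rw [Fin.natCast_self_sub (by omega)]; push_cast; ring
  simpa only [Nat.cast_zero, add_zero, hK, hs, ht] using h

theorem IsConvexPolygon.disjoint_openSegment_of_mem_reflectionMatching {E : Type*}
    [NormedAddCommGroup E] [NormedSpace ℝ E] [FiniteDimensional ℝ E] {p : Fin n → E}
    (hP : IsConvexPolygon p) (hE : finrank ℝ E = 2) {i : ℕ} {u v u' v' : Fin n}
    (h : s(u, v) ∈ reflectionMatching n i) (h' : s(u', v') ∈ reflectionMatching n i)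
    (hne : s(u, v) ≠ s(u', v')) :
    Disjoint (openSegment ℝ (p u) (p v)) (openSegment ℝ (p u') (p v')) := by
  obtain ⟨a, ha, hea⟩ := Finset.mem_image.1 h
  obtain ⟨b, hb, heb⟩ := Finset.mem_image.1 h'
  rw [← openSegment_eq_of_mk_eq p hea, ← openSegment_eq_of_mk_eq p heb]
  rcases lt_or_gt_of_ne (fun hab : a = b => hne (hea ▸ heb ▸ hab ▸ rfl)) with hab | hab
  · exact hP.disjoint_openSegment_reflection hE hab (Finset.mem_range.1 hb)
  · exact (hP.disjoint_openSegment_reflection hE hab (Finset.mem_range.1 ha)).symm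

end Matching

/-- For `n` points `p 0, …, p (n-1)` labeled in convex (radial) order in the
plane, `n` even, the `n/2` matchings
`M i = { {p (i+j-1), p (n+i-j)} : j = 1, …, n/2 }` (indices mod `n`, written
below with `a = j - 1`) are perfect, non-crossing, and pairwise edge-disjoint;
hence `n/2` pairwise edge-disjoint non-crossing perfect matchings exist. -/
theorem stmt_12 (n : ℕ) [NeZero n] (hn : Even n)
    (p : Fin n → EuclideanSpace ℝ (Fin 2)) (hinj : Function.Injective p)
    (hconv : ∀ i, p i ∉ convexHull ℝ (Set.range p \ {p i}))
    (hconsec : ∀ i : Fin n,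
      segment ℝ (p i) (p (i + 1)) ⊆ frontier (convexHull ℝ (Set.range p)))
    (M : ℕ → Finset (Sym2 (Fin n)))
    (hM : ∀ i, M i = (Finset.range (n / 2)).image
      fun a : ℕ => s((i : Fin n) + (a : Fin n), (i : Fin n) - 1 - (a : Fin n))) :
    (∀ i < n / 2, ∀ v : Fin n, ∃! e, e ∈ M i ∧ v ∈ e) ∧
    (∀ i < n / 2, ∀ u v u' v' : Fin n, s(u, v) ∈ M i → s(u', v') ∈ M i →
      s(u, v) ≠ s(u', v') →
      ∀ x, x ∈ openSegment ℝ (p u) (p v) → x ∉ openSegment ℝ (p u') (p v')) ∧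
    (∀ i < n / 2, ∀ j < n / 2, i ≠ j → Disjoint (M i) (M j)) := by
  have hP : IsConvexPolygon p := ⟨hinj, hconv, hconsec⟩
  have hE : finrank ℝ (EuclideanSpace ℝ (Fin 2)) = 2 := finrank_euclideanSpace_fin
  simp only [hM]
  exact ⟨fun i _ v => existsUnique_mem_reflectionMatching hn i v,
    fun i _ u v u' v' h h' hne =>
      Set.disjoint_left.1 (hP.disjoint_openSegment_of_mem_reflectionMatching hE h h' hne),
    fun i hi j hj hij => disjoint_reflectionMatching hi hj hij⟩
end

section
/- Let n be even and let M_1,...,M_k be pairwise edge-disjoint perfect matchings of the complete graph K_n. Then the graph obtained from K_n by deleting all edges of M_1 union ... union M_k is (n-1-k)-regular and is (n-1-2k)-vertex-connected (when n-1-2k >= 1). -/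
/-- Removing `k` pairwise edge-disjoint perfect matchings from `K_n` (`n`
even) yields an `(n-1-k)`-regular graph that is `(n-1-2k)`-vertex-connected
(when `n - 1 - 2k ≥ 1`): removing fewer than `n-1-2k` vertices never
disconnects it. -/
theorem stmt_15 (n k : ℕ) (hn : Even n)
    (M : Fin k → (⊤ : SimpleGraph (Fin n)).Subgraph)
    (hpm : ∀ i, (M i).IsPerfectMatching)
    (hdisj : ∀ i j, i ≠ j → Disjoint (M i).edgeSet (M j).edgeSet)
    (hk : 1 ≤ n - 1 - 2 * k) :
    (∀ v, (((⊤ : SimpleGraph (Fin n)).deleteEdges (⋃ i, (M i).edgeSet)).neighborSet v).ncard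
        = n - 1 - k) ∧
    (∀ S : Set (Fin n), S.ncard < n - 1 - 2 * k →
      ((((⊤ : SimpleGraph (Fin n)).deleteEdges (⋃ i, (M i).edgeSet)).induce Sᶜ)).Connected) := by
  classical
  set G := ((⊤ : SimpleGraph (Fin n)).deleteEdges (⋃ i, (M i).edgeSet)) with hG
  choose f hf huniq using fun i v => (hpm i).1 ((hpm i).2 v)
  -- symmetry of f
  have hsymm : ∀ i v, f i (f i v) = v := fun i v =>
    (huniq i (f i v) v ((hf i v).symm)).symm
  have hne : ∀ i v, f i v ≠ v := fun i v => ((hf i v).ne).symm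
  -- injectivity in i
  have hinj : ∀ v, Function.Injective (fun i => f i v) := by
    intro v i j hij
    by_contra hne'
    exact Set.disjoint_left.mp (hdisj i j hne') (SimpleGraph.Subgraph.mem_edgeSet.mpr (hf i v))
      (SimpleGraph.Subgraph.mem_edgeSet.mpr (by simpa [hij] using hf j v))
  -- adjacency characterization
  have hGadj : ∀ u w, G.Adj u w ↔ u ≠ w ∧ ∀ i, w ≠ f i u := by
    intro u w
    simp only [hG, SimpleGraph.deleteEdges_adj, SimpleGraph.top_adj, Set.mem_iUnion,
      SimpleGraph.Subgraph.mem_edgeSet, not_exists]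
    constructor
    · rintro ⟨h1, h2⟩
      refine ⟨h1, fun i hiw => h2 i ?_⟩
      rw [hiw]; exact hf i u
    · rintro ⟨h1, h2⟩
      exact ⟨h1, fun i hadj => h2 i (huniq i u w hadj)⟩
  have hrange : ∀ v, (Set.range fun i => f i v).ncard = k := by
    intro v
    rw [← Nat.card_coe_set_eq, Nat.card_range_of_injective (hinj v), Nat.card_eq_fintype_card,
      Fintype.card_fin]
  constructor
  · intro v
    have hset : G.neighborSet v = (insert v (Set.range fun i => f i v))ᶜ := by
      ext w
      simp only [SimpleGraph.mem_neighborSet, hGadj, Set.mem_compl_iff, Set.mem_insert_iff,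
        Set.mem_range, not_or, not_exists]
      constructor
      · rintro ⟨h1, h2⟩
        exact ⟨fun h => h1 h.symm, fun i h => h2 i h.symm⟩
      · rintro ⟨h1, h2⟩
        exact ⟨fun h => h1 h.symm, fun i h => h2 i h.symm⟩
    have hvnot : v ∉ (Set.range fun i => f i v) := by
      rintro ⟨i, hi⟩
      exact hne i v hi
    have hins : (insert v (Set.range fun i => f i v)).ncard = k + 1 := by
      rw [Set.ncard_insert_of_notMem hvnot, hrange]
    have := Set.ncard_add_ncard_compl (insert v (Set.range fun i => f i v))
    rw [hset]
    simp only [Nat.card_eq_fintype_card, Fintype.card_fin] at this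
    omega
  · intro S hS
    have hn2 : 2 * k + 2 ≤ n := by omega
    have hScard : S.ncard + 2 * k + 2 ≤ n := by omega
    have hkey : ∀ u w : Fin n, u ∉ S → w ∉ S → u ≠ w → ¬G.Adj u w →
        ∃ x, x ∉ S ∧ G.Adj u x ∧ G.Adj x w := by
      intro u w hu hw huw hnadj
      obtain ⟨i, hiw⟩ : ∃ i, w = f i u := by
        by_contra h
        push_neg at h
        exact hnadj ((hGadj u w).mpr ⟨huw, h⟩)
      set B := S ∪ Set.range (fun i => f i u) ∪ Set.range (fun i => f i w) with hB
      have hBcard : B.ncard < n := by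
        calc B.ncard ≤ (S ∪ Set.range fun i => f i u).ncard +
              (Set.range fun i => f i w).ncard := Set.ncard_union_le _ _
          _ ≤ S.ncard + (Set.range fun i => f i u).ncard +
              (Set.range fun i => f i w).ncard := by
              have := Set.ncard_union_le S (Set.range fun i => f i u)
              omega
          _ = S.ncard + k + k := by rw [hrange, hrange]
          _ < n := by omega
      obtain ⟨x, hx⟩ : ∃ x, x ∉ B := by
        by_contra h
        push_neg at h
        have : B = Set.univ := Set.eq_univ_of_forall h
        rw [this] at hBcard
        simp [Set.ncard_univ] at hBcard
      simp only [hB, Set.mem_union, Set.mem_range, not_or, not_exists] at hx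
      obtain ⟨⟨hxS, hxu⟩, hxw⟩ := hx
      have hxu' : x ≠ u := by
        rintro rfl
        exact hxw i (by rw [hiw, hsymm])
      have hxw' : x ≠ w := by
        rintro rfl
        exact hxu i hiw.symm
      refine ⟨x, hxS, (hGadj u x).mpr ⟨fun h => hxu' h.symm, fun j h => hxu j h.symm⟩,
        (hGadj x w).mpr ⟨hxw', fun j h => hxw j ?_⟩⟩
      rw [h, hsymm]
    have hex : ∃ x : Fin n, x ∉ S := by
      by_contra h
      push_neg at h
      have : S = Set.univ := Set.eq_univ_of_forall h
      rw [this, Set.ncard_univ] at hS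
      simp at hS
      omega

    obtain ⟨x0, hx0⟩ := hex
    rw [SimpleGraph.connected_iff]
    refine ⟨?_, ⟨⟨x0, hx0⟩⟩⟩
    rintro ⟨u, hu⟩ ⟨w, hw⟩
    by_cases huw : u = w
    · subst huw; rfl
    · by_cases hadj : G.Adj u w
      · exact SimpleGraph.Adj.reachable hadj
      · obtain ⟨x, hxS, h1, h2⟩ := hkey u w hu hw huw hadj
        have r1 : (G.induce Sᶜ).Adj ⟨u, hu⟩ ⟨x, hxS⟩ := by
          simp only [SimpleGraph.comap_adj, Function.Embedding.coe_subtype]; exact h1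
        have r2 : (G.induce Sᶜ).Adj ⟨x, hxS⟩ ⟨w, hw⟩ := by
          simp only [SimpleGraph.comap_adj, Function.Embedding.coe_subtype]; exact h2
        exact r1.reachable.trans r2.reachable
end

section
/- Let n be even with n congruent to 2 modulo 4. Then there exist n/2 pairwise edge-disjoint perfect matchings of K_n whose removal leaves a graph with no perfect matching. Consequently, the matching persistency of K_n equals n/2 in this case. -/
/-!
Deleting `k` perfect matchings from `K_n` leaves a graph in which every vertex has degree at
least `n - 1 - k`, which is at least `n / 2` when `k < n / 2`; a graph on an even number of
vertices with minimum degree at least half its order has a perfect matching, by Tutte's theorem.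
Conversely, identify the vertices with `α ⊕ α` for `α = Fin (n / 2)` and delete the perfect
matchings `inl x ↔ inr (x + a)`, one for each `a : α`. They exhaust the edges between the two
halves, so a perfect matching of the remainder would restrict to a perfect matching on the
`n / 2` vertices of one half, which is impossible as `n / 2` is odd.
-/

namespace SimpleGraph

variable {V : Type*} {G : SimpleGraph V}

lemma degree_add_one_le_ncard_supp_add_ncard [Fintype V] [DecidableRel G.Adj] {u : Set V}
    (K : ((⊤ : G.Subgraph).deleteVerts u).coe.ConnectedComponent) {v} (hv : v ∈ K.supp) :
    G.degree v.1 + 1 ≤ K.supp.ncard + u.ncard := by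
  have hsub : insert v.1 (G.neighborSet v) ⊆ Subtype.val '' K.supp ∪ u := by
    rintro w (rfl | hw)
    · exact Or.inl ⟨v, hv, rfl⟩
    by_cases hwu : w ∈ u
    · exact Or.inr hwu
    have hw' : w ∈ ((⊤ : G.Subgraph).deleteVerts u).verts := by simp [hwu]
    refine Or.inl ⟨⟨w, hw'⟩, ?_, rfl⟩
    have hvw : ((⊤ : G.Subgraph).deleteVerts u).coe.Adj v ⟨w, hw'⟩ := by
      simpa [hwu] using ⟨v.2.2, hw⟩
    rw [ConnectedComponent.mem_supp_iff] at hv ⊢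
    exact hv ▸ (ConnectedComponent.connectedComponentMk_eq_of_adj hvw).symm
  calc G.degree v.1 + 1 = (insert v.1 (G.neighborSet v)).ncard := by
        rw [Set.ncard_insert_of_notMem (by simp), ← card_neighborFinset_eq_degree,
          ← Set.ncard_coe_finset, coe_neighborFinset]
    _ ≤ (Subtype.val '' K.supp ∪ u).ncard := Set.ncard_le_ncard hsub
    _ ≤ (Subtype.val '' K.supp).ncard + u.ncard := Set.ncard_union_le _ _
    _ = K.supp.ncard + u.ncard := by rw [Set.ncard_image_of_injective _ Subtype.val_injective]

lemma ncard_mul_le_card_of_le_ncard_supp [Finite V] (S : Set G.ConnectedComponent) {m : ℕ}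
    (h : ∀ K ∈ S, m ≤ K.supp.ncard) : S.ncard * m ≤ Nat.card V := by
  classical
  cases nonempty_fintype V
  have := Finset.card_mul_le_card_mul (s := S.toFinset) (t := Finset.univ)
    (fun K v => v ∈ K.supp) (m := m) (n := 1) ?_ ?_
  · rw [Set.ncard_eq_toFinset_card', Nat.card_eq_fintype_card, ← Finset.card_univ]
    simpa using this
  · intro K hK
    rw [Finset.bipartiteAbove, ← Set.ncard_coe_finset, Finset.coe_filter_univ]
    exact h K (by simpa using hK)
  · intro v _
    refine Finset.card_le_one.2 fun K hK K' hK' => ?_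
    simp only [Finset.mem_bipartiteBelow, ConnectedComponent.mem_supp_iff] at hK hK'
    exact hK.2.symm.trans hK'.2

theorem exists_isPerfectMatching_of_card_le_two_mul_degree [Fintype V] [DecidableRel G.Adj]
    (hV : Even (Fintype.card V)) (hdeg : ∀ v, Fintype.card V ≤ 2 * G.degree v) :
    ∃ M : G.Subgraph, M.IsPerfectMatching := by
  rw [tutte]
  intro u hu
  set n := Fintype.card V
  set s := u.ncard
  set W := ((⊤ : G.Subgraph).deleteVerts u).coe
  set c := W.oddComponents.ncard
  have hc : s < c := hu
  have hs : s ≤ n := by simpa [n] using Set.ncard_le_card u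
  have hW : Nat.card ((⊤ : G.Subgraph).deleteVerts u).verts = n - s := by
    rw [Subgraph.deleteVerts_verts, Subgraph.verts_top, Nat.card_coe_set_eq,
      Set.ncard_sdiff (Set.subset_univ u), Set.ncard_univ, Nat.card_eq_fintype_card]
  have hparity : Odd c ↔ Odd (n - s) := hW ▸ W.odd_ncard_oddComponents
  have hlarge : ∀ K ∈ W.oddComponents, n / 2 + 1 - s ≤ K.supp.ncard := by
    intro K _
    obtain ⟨v, hv⟩ := K.nonempty_supp
    have hKv := degree_add_one_le_ncard_supp_add_ncard K hv
    have hv_deg := hdeg v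
    omega
  have hpos : ∀ K ∈ W.oddComponents, 1 ≤ K.supp.ncard := fun K hK => hK.pos
  have hcount_pos := ncard_mul_le_card_of_le_ncard_supp _ hpos
  have hcount_large := ncard_mul_le_card_of_le_ncard_supp _ hlarge
  rw [hW] at hcount_pos hcount_large
  rw [Nat.odd_iff, Nat.odd_iff] at hparity
  obtain ⟨h, hn⟩ := hV
  -- `c ≡ n - s ≡ s [MOD 2]`
  have hcs : s + 2 ≤ c := by omega
  -- `s + 2` components of size `h + 1 - s` do not fit into `2 * h - s` vertices
  rcases le_or_gt s h with hsh | hsh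
  · obtain ⟨t, rfl⟩ := Nat.exists_eq_add_of_le hsh
    rw [show n / 2 + 1 - s = t + 1 by omega, show n - s = s + 2 * t by omega] at hcount_large
    nlinarith [Nat.mul_le_mul_right (t + 1) hcs]
  · omega

lemma degree_le_degree_deleteEdges_iUnion_add_card {ι : Type*} [Fintype ι] [Fintype V]
    [DecidableRel G.Adj] {M : ι → G.Subgraph} (hM : ∀ i, (M i).IsMatching)
    [DecidableRel (G.deleteEdges (⋃ i, (M i).edgeSet)).Adj] (v : V) :
    G.degree v ≤ (G.deleteEdges (⋃ i, (M i).edgeSet)).degree v + Fintype.card ι := by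
  set H := G.deleteEdges (⋃ i, (M i).edgeSet)
  have hsub : G.neighborSet v ⊆ H.neighborSet v ∪ ⋃ i, (M i).neighborSet v := by
    intro w hw
    by_cases hdel : s(v, w) ∈ ⋃ i, (M i).edgeSet
    · exact Or.inr (by simpa using hdel)
    · exact Or.inl (deleteEdges_adj.2 ⟨hw, hdel⟩)
  have hle : ∀ i, ((M i).neighborSet v).ncard ≤ 1 := fun i =>
    (Set.ncard_le_one_iff).2 fun hw hw' => (hM i).eq_of_adj_left hw hw'
  simp only [← card_neighborSet_eq_degree, ← Nat.card_eq_fintype_card, Nat.card_coe_set_eq]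
  calc (G.neighborSet v).ncard
      ≤ (H.neighborSet v).ncard + (⋃ i, (M i).neighborSet v).ncard :=
        (Set.ncard_le_ncard hsub).trans (Set.ncard_union_le _ _)
    _ ≤ (H.neighborSet v).ncard + ∑ _i : ι, 1 := by
        gcongr
        exact (Set.ncard_iUnion_le_of_fintype _).trans (Finset.sum_le_sum fun i _ => hle i)
    _ = (H.neighborSet v).ncard + Nat.card ι := by simp

lemma not_isPerfectMatching_of_odd_ncard_of_adj_mem [Finite V] {A : Set V} (hA : Odd A.ncard)
    (hA' : ∀ a ∈ A, ∀ b, G.Adj a b → b ∈ A) (M : G.Subgraph) : ¬ M.IsPerfectMatching := by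
  classical
  cases nonempty_fintype V
  intro hM
  have hMA : (M.induce A).IsMatching := by
    intro v hv
    obtain ⟨w, hvw, hw⟩ := hM.1 (hM.2 v)
    exact ⟨w, ⟨hv, hA' v hv w (M.adj_sub hvw), hvw⟩, fun w' h => hw w' h.2.2⟩
  have := hMA.even_card
  rw [Subgraph.induce_verts, Set.toFinset_card, ← Nat.card_eq_fintype_card,
    Nat.card_coe_set_eq] at this
  exact Nat.not_even_iff_odd.2 hA this

section Involution

variable {σ : V → V} (hσ : Function.Involutive σ) (hfix : ∀ v, σ v ≠ v)

def matchingOfInvolution : (⊤ : SimpleGraph V).Subgraph where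
  verts := Set.univ
  Adj v w := σ v = w
  adj_sub h := h ▸ (hfix _).symm
  edge_vert _ := trivial
  symm := ⟨fun v _ h => h ▸ hσ v⟩

lemma isPerfectMatching_matchingOfInvolution :
    (matchingOfInvolution hσ hfix).IsPerfectMatching :=
  Subgraph.isPerfectMatching_iff.2 fun _ => existsUnique_eq'

@[simp]
lemma mem_edgeSet_matchingOfInvolution {v w : V} :
    s(v, w) ∈ (matchingOfInvolution hσ hfix).edgeSet ↔ σ v = w := Iff.rfl

end Involution

section Cross

variable {α : Type*} [AddCommGroup α] (e : V ≃ α ⊕ α)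

def crossPairing (a : α) (v : V) : V :=
  e.symm ((e v).elim (fun x => .inr (x + a)) (fun y => .inl (y - a)))

lemma crossPairing_involutive (a : α) : Function.Involutive (crossPairing e a) := by
  intro v
  rcases h : e v with x | y <;> simp [crossPairing, h, Equiv.symm_apply_eq]

lemma crossPairing_ne_self (a : α) (v : V) : crossPairing e a v ≠ v := by
  rcases h : e v with x | y <;> simp [crossPairing, h, Equiv.symm_apply_eq]

lemma eq_of_crossPairing_eq {a b : α} {v : V} (h : crossPairing e a v = crossPairing e b v) :
    a = b := by
  rcases hv : e v with x | y <;> simpa [crossPairing, hv] using h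

lemma crossPairing_sub_symm_inl (x y : α) :
    crossPairing e (y - x) (e.symm (.inl x)) = e.symm (.inr y) := by
  simp [crossPairing]

def crossMatching (a : α) : (⊤ : SimpleGraph V).Subgraph :=
  matchingOfInvolution (crossPairing_involutive e a) (crossPairing_ne_self e a)

lemma isPerfectMatching_crossMatching (a : α) : (crossMatching e a).IsPerfectMatching :=
  isPerfectMatching_matchingOfInvolution _ _

lemma disjoint_edgeSet_crossMatching {a b : α} (hab : a ≠ b) :
    Disjoint (crossMatching e a).edgeSet (crossMatching e b).edgeSet := by
  refine Set.disjoint_left.2 fun s ha hb => hab ?_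
  induction s using Sym2.ind with
  | _ v w =>
    simp only [crossMatching, mem_edgeSet_matchingOfInvolution] at ha hb
    exact eq_of_crossPairing_eq e (ha.trans hb.symm)

lemma not_exists_isPerfectMatching_deleteEdges_crossMatching [Finite α]
    (hα : Odd (Nat.card α)) :
    ¬ ∃ N : ((⊤ : SimpleGraph V).deleteEdges (⋃ a, (crossMatching e a).edgeSet)).Subgraph,
      N.IsPerfectMatching := by
  have : Finite V := Finite.of_equiv _ e.symm
  rintro ⟨N, hN⟩
  refine not_isPerfectMatching_of_odd_ncard_of_adj_mem (A := Set.range (e.symm ∘ .inl)) ?_ ?_ N hN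
  · rwa [Set.ncard_range_of_injective (e.symm.injective.comp Sum.inl_injective)]
  · rintro _ ⟨x, rfl⟩ w hw
    rcases hew : e w with x' | y
    · exact ⟨x', by simp [← hew]⟩
    · refine absurd hw fun hadj => (deleteEdges_adj.1 hadj).2 (Set.mem_iUnion.2 ⟨y - x, ?_⟩)
      exact (crossPairing_sub_symm_inl e x y).trans (e.symm_apply_eq.2 hew.symm)

end Cross

end SimpleGraph

open SimpleGraph

/-- For `n ≡ 2 (mod 4)`, the matching persistency of `K_n` equals `n/2`:
`n/2` is the least cardinality of a family of pairwise edge-disjoint perfect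
matchings of `K_n` whose removal leaves a graph with no perfect matching.  In
particular such a family of size `n/2` exists. -/
theorem stmt_17 (n : ℕ) (hn : n % 4 = 2) :
    IsLeast
      {k : ℕ | ∃ M : Fin k → (⊤ : SimpleGraph (Fin n)).Subgraph,
        (∀ i, (M i).IsPerfectMatching) ∧
        (∀ i j, i ≠ j → Disjoint (M i).edgeSet (M j).edgeSet) ∧
        ¬ ∃ N : ((⊤ : SimpleGraph (Fin n)).deleteEdges (⋃ i, (M i).edgeSet)).Subgraph,
            N.IsPerfectMatching}
      (n / 2) := by
  classical
  refine ⟨?_, ?_⟩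
  · have : NeZero (n / 2) := ⟨by omega⟩
    let e : Fin n ≃ Fin (n / 2) ⊕ Fin (n / 2) := (finCongr (by omega)).trans finSumFinEquiv.symm
    exact ⟨crossMatching e, isPerfectMatching_crossMatching e,
      fun _ _ => disjoint_edgeSet_crossMatching e,
      not_exists_isPerfectMatching_deleteEdges_crossMatching e
        (by rw [Nat.card_fin]; exact Nat.odd_iff.2 (by omega))⟩
  · rintro k ⟨M, hM, -, hno⟩
    by_contra! hk
    refine hno (exists_isPerfectMatching_of_card_le_two_mul_degree ?_ fun v => ?_)
    · rw [Fintype.card_fin]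
      exact Nat.even_iff.2 (by omega)
    · have := degree_le_degree_deleteEdges_iUnion_add_card (fun i => (hM i).1) v
      simp only [complete_graph_degree, Fintype.card_fin] at this ⊢
      omega
end
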